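/- arXiv:hep-th/9309118 — 2 statements merged into one kernel-verified Lean document; each statement's English description precedes it below -/
import Mathlib

section
/- Let n, N be positive integers, and suppose ϑ satisfies the transformation law ϑ(x₁,…,x_μτ⁴,…,xₙ|z₁,…,z_N) = ϑ(x₁,…,xₙ|z₁,…,z_N)·∏_{j=1}^N (−x_μτ/z_j). Then for every μ ∈ {1,…,n} and all x ∈ (ℂ∖{0})ⁿ, z ∈ (ℂ∖{0})^N such that no ratio x_ν/z_j is an odd integer power of q, one has Ψ(x₁,…,x_μτ⁴,…,xₙ|z₁,…,z_N) = τ^{−2N} · ∏_{j=1}^N (x_μ − z_jτ⁻¹)/(x_μ − z_jτ⁻³) · Ψ(x₁,…,xₙ|z₁,…,z_N). -/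
open Finset Function

noncomputable section

/-- The infinite product `(z;p)_∞ = ∏_{k≥0} (1 - z p^k)`. -/
def pochInf (z p : ℂ) : ℂ := ∏' k : ℕ, (1 - z * p ^ k)

/-- `ψ(z) = 1/((zq;q⁴)_∞ (z⁻¹q;q⁴)_∞)`. -/
def psiF (q z : ℂ) : ℂ := 1 / (pochInf (z * q) (q ^ 4) * pochInf (z⁻¹ * q) (q ^ 4))

/-- The kernel `Ψ(x₁,…,xₙ|z₁,…,z_N) = ϑ(x|z)·∏_{μ,j} ψ(x_μ/z_j)`. -/
def kerPsi (q : ℂ) {n N : ℕ} (θ : (Fin n → ℂ) → (Fin N → ℂ) → ℂ)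
    (x : Fin n → ℂ) (z : Fin N → ℂ) : ℂ :=
  θ x z * ∏ μ : Fin n, ∏ j : Fin N, psiF q (x μ / z j)

/-- One-variable kernel `Ψ(x|z₁,…,z_N) = ϑ(x|z)·∏_j ψ(x/z_j)`. -/
def kerPsi1 (q : ℂ) {N : ℕ} (θ : ℂ → (Fin N → ℂ) → ℂ) (x : ℂ) (z : Fin N → ℂ) : ℂ :=
  θ x z * ∏ j : Fin N, psiF q (x / z j)

/-- Elementary symmetric polynomial `σ_κ(a₁,…,a_m)`. -/
def esym {m : ℕ} (a : Fin m → ℂ) (κ : ℕ) : ℂ :=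
  ∑ s ∈ Finset.powersetCard κ (Finset.univ : Finset (Fin m)), ∏ i ∈ s, a i

/-- Complete homogeneous symmetric polynomial `σ̃_κ(a₁,…,a_m)`. -/
def hsym {m : ℕ} (a : Fin m → ℂ) (κ : ℕ) : ℂ :=
  ∑ μ ∈ (Finset.univ : Finset (Fin m)).sym κ, (Multiset.map a (μ : Multiset (Fin m))).prod

/-- `h^{(m)}(x|z) = x⁻¹(∏_j (x - z_jτ) - τ^{2m} ∏_j (x - z_jτ⁻¹))` as a polynomial in `x`
(the bracket vanishes at `x = 0`, so division is exact). -/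
def hN (τ : ℂ) {m : ℕ} (z : Fin m → ℂ) : Polynomial ℂ :=
  ((∏ j : Fin m, (Polynomial.X - Polynomial.C (z j * τ)))
      - Polynomial.C (τ ^ (2 * m)) * ∏ j : Fin m, (Polynomial.X - Polynomial.C (z j * τ⁻¹)))
    /ₘ Polynomial.X

/-- `φ^{(nl)}_{λκ}(a|b)`. -/
def phiP (τ : ℂ) {n l : ℕ} (lam κ : ℕ) (a : Fin n → ℂ) (b : Fin l → ℂ) : ℂ :=
  esym b κ - ∑ β ∈ Finset.Icc lam κ, ∑ α ∈ Finset.Icc lam β,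
    (-1 : ℂ) ^ (β - α) * τ ^ (2 * β) * esym b (κ - β) * esym a α * hsym a (β - α)

/-- `f^{(nl)}_λ(x|a|b) = Σ_{κ=0}^{l−n+λ−2} (1 − τ^{2(l−n+λ−1−κ)})(−τ)^κ φ^{(nl)}_{λκ}(a|b)
x^{l−n+λ−2−κ}` (empty sum if `l−n+λ−2 < 0`). -/
def fP (τ : ℂ) {n l : ℕ} (lam : ℕ) (x : ℂ) (a : Fin n → ℂ) (b : Fin l → ℂ) : ℂ :=
  ∑ κ ∈ Finset.range ((l : ℤ) - n + lam - 1).toNat,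
    (1 - τ ^ (2 * (((l : ℤ) - n + lam - 1).toNat - κ))) * (-τ) ^ κ * phiP τ lam κ a b
      * x ^ (((l : ℤ) - n + lam - 1).toNat - 1 - κ)

/-- `g^{(n)}_λ(x|a) = Σ_{κ=0}^{λ−2} (1 − τ^{2(λ−1−κ)})(−τ)^κ σ_κ(a) x^{λ−2−κ}`. -/
def gP (τ : ℂ) {n : ℕ} (lam : ℕ) (x : ℂ) (a : Fin n → ℂ) : ℂ :=
  ∑ κ ∈ Finset.range (lam - 1),
    (1 - τ ^ (2 * (lam - 1 - κ))) * (-τ) ^ κ * esym a κ * x ^ (lam - 2 - κ)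

/-- `A^{(nl)}_λ(x|a|b)`. -/
def AP (τ : ℂ) {n l : ℕ} (lam : ℕ) (x : ℂ) (a : Fin n → ℂ) (b : Fin l → ℂ) : ℂ :=
  (∏ j : Fin n, (x - a j * τ)) * fP τ lam x a b
    + τ ^ (2 * (l - n + lam - 1)) * (∏ i : Fin l, (x - b i * τ⁻¹)) * gP τ lam x a

/-- `Δ^{(nl)}(x₁,…,xₙ|a|b) = det(A^{(nl)}_λ(x_μ|a|b))_{1 ≤ λ,μ ≤ n}`. -/
def DeltaP (τ : ℂ) {n l : ℕ} (x : Fin n → ℂ) (a : Fin n → ℂ) (b : Fin l → ℂ) : ℂ :=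
  Matrix.det (Matrix.of fun lam μ : Fin n => AP τ ((lam : ℕ) + 1) (x μ) a b)

/-- The explicit `Δ(x|z₁|b₁,…,b_m)` of the case `n = 1` (here `m = N − 1`):
`(x−z₁τ)·Σ_{κ=0}^{N−3}(1−τ^{2(N−2−κ)})(−τ)^κ x^{N−3−κ} Σ_{λ=0}^{κ}(−z₁τ²)^λ σ_{κ−λ}(b)`. -/
def Delta1 (τ : ℂ) {m : ℕ} (x z1 : ℂ) (b : Fin m → ℂ) : ℂ :=
  (x - z1 * τ) * ∑ κ ∈ Finset.range (m - 1),
    (1 - τ ^ (2 * (m - 1 - κ))) * (-τ) ^ κ * x ^ (m - 2 - κ) *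
      ∑ lam ∈ Finset.range (κ + 1), (-(z1 * τ ^ 2)) ^ lam * esym b (κ - lam)

/-- Iterated contour integral over `n` copies of the anticlockwise circle `|x| = ρ`. -/
def multiCircle : (n : ℕ) → ((Fin n → ℂ) → ℂ) → ℝ → ℂ
  | 0, f, _ => f (fun i => i.elim0)
  | n + 1, f, ρ => ∮ t in C(0, ρ), multiCircle n (fun x => f (Fin.cons t x)) ρ

/-- `H(a|b) = ∮⋯∮ F(x|a,b) Ψ(x|a,b) dx₁⋯dxₙ` with
`F = Δ^{(nl)}(x|a|b)/∏_{j,i}(b_i − a_jτ²)`. -/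
def Hfun (q τ : ℂ) {n l : ℕ} (θ : (Fin n → ℂ) → (Fin (n + l) → ℂ) → ℂ)
    (a : Fin n → ℂ) (b : Fin l → ℂ) (ρ : ℝ) : ℂ :=
  multiCircle n (fun x =>
    (DeltaP τ x a b / ∏ j : Fin n, ∏ i : Fin l, (b i - a j * τ ^ 2)) *
      kerPsi q θ x (Fin.append a b)) ρ

/-- The radius `ρ` separates the poles: `max_i |w_i q| < ρ < min_i |w_i q⁻¹|`
for the tuple `w = (a, b)`. -/
def admissible (q : ℂ) {n l : ℕ} (a : Fin n → ℂ) (b : Fin l → ℂ) (ρ : ℝ) : Prop :=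
  (∀ j, ‖a j * q‖ < ρ) ∧ (∀ j, ρ < ‖a j * q⁻¹‖) ∧
  (∀ i, ‖b i * q‖ < ρ) ∧ (∀ i, ρ < ‖b i * q⁻¹‖)

/-- The denominator of `F` does not vanish: `w_i − w_jτ² ≠ 0` for `1 ≤ j ≤ n < i ≤ N`. -/
def regularF (τ : ℂ) {n l : ℕ} (a : Fin n → ℂ) (b : Fin l → ℂ) : Prop :=
  ∀ (j : Fin n) (i : Fin l), b i - a j * τ ^ 2 ≠ 0

end

/-! Since `(w;p)_∞ = (1 - w)(wp;p)_∞`, replacing `y` by `yq⁻⁴` in `ψ(y)` moves one Pochhammer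
symbol a step forward and the other a step back, so `ψ(yq⁻⁴) = (1 - q/y)/(1 - y/q³) ψ(y)`.
Only the `N` factors `ψ(x_μ/z_j)` of `Ψ` involve `x_μ`, and together with the factor
`-x_μ τ/z_j` from `ϑ` each of them picks up `q²(x_μ - z_j q)/(x_μ - z_j q³)`. -/

lemma multipliable_one_sub_mul_pow (w : ℂ) {p : ℂ} (hp : ‖p‖ < 1) :
    Multipliable fun k : ℕ => 1 - w * p ^ k := by
  simp only [sub_eq_add_neg]
  refine multipliable_one_add_of_summable ?_
  simp only [norm_neg, norm_mul, norm_pow]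
  exact (summable_geometric_of_lt_one (norm_nonneg p) hp).mul_left ‖w‖

lemma pochInf_eq_one_sub_mul (w : ℂ) {p : ℂ} (hp : ‖p‖ < 1) :
    pochInf w p = (1 - w) * pochInf (w * p) p := by
  have hm : Multipliable fun k : ℕ => 1 - w * p ^ (k + 1) := by
    simpa only [pow_succ', mul_assoc] using multipliable_one_sub_mul_pow (w * p) hp
  rw [pochInf, tprod_eq_zero_mul' (f := fun k => 1 - w * p ^ k) hm, pochInf, pow_zero, mul_one]
  simp only [pow_succ', mul_assoc]

lemma psiF_mul_inv_pow_four {q : ℂ} (hq0 : q ≠ 0) (hq1 : ‖q‖ < 1) {y : ℂ}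
    (h1 : y ≠ q) (h3 : y ≠ q ^ 3) :
    psiF q (y * q⁻¹ ^ 4) = (1 - q / y) / (1 - y / q ^ 3) * psiF q y := by
  have hq4 : ‖q ^ 4‖ < 1 := by
    rw [norm_pow]
    exact pow_lt_one₀ (norm_nonneg q) hq1 (by norm_num)
  have hA := pochInf_eq_one_sub_mul (y / q ^ 3) hq4
  have hB := pochInf_eq_one_sub_mul (q / y) hq4
  rw [show y / q ^ 3 * q ^ 4 = y * q by field_simp] at hA
  rw [psiF, psiF, show y * q⁻¹ ^ 4 * q = y / q ^ 3 by field_simp,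
    show (y * q⁻¹ ^ 4)⁻¹ * q = q / y * q ^ 4 by field_simp, inv_mul_eq_div, hA, hB]
  have h3' : 1 - y / q ^ 3 ≠ 0 := by
    rw [sub_ne_zero, ne_comm, Ne, div_eq_one_iff_eq (pow_ne_zero 3 hq0)]
    exact h3
  by_cases hy : y = 0
  · simp [hy]
  have h1' : 1 - q / y ≠ 0 := by
    rw [sub_ne_zero, ne_comm, Ne, div_eq_one_iff_eq hy]
    exact h1.symm
  field_simp

lemma neg_mul_div_mul_psiF_mul_inv_pow_four {q : ℂ} (hq0 : q ≠ 0) (hq1 : ‖q‖ < 1) {x z : ℂ}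
    (hx : x ≠ 0) (hz : z ≠ 0) (h1 : x / z ≠ q) (h3 : x / z ≠ q ^ 3) :
    -x * q⁻¹ / z * psiF q (x * q⁻¹ ^ 4 / z)
      = q ^ 2 * ((x - z / q⁻¹) / (x - z / q⁻¹ ^ 3)) * psiF q (x / z) := by
  rw [mul_div_right_comm x, psiF_mul_inv_pow_four hq0 hq1 h1 h3, ← mul_assoc]
  congr 1
  field_simp
  rw [← div_neg, neg_sub]

lemma kerPsi_update (q : ℂ) {n N : ℕ} (θ : (Fin n → ℂ) → (Fin N → ℂ) → ℂ)
    (x : Fin n → ℂ) (z : Fin N → ℂ) (μ : Fin n) (w : ℂ) :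
    kerPsi q θ (update x μ w) z = θ (update x μ w) z * (∏ j, psiF q (w / z j)) *
      ∏ ν ∈ univ \ {μ}, ∏ j, psiF q (x ν / z j) := by
  rw [kerPsi, mul_assoc, ← prod_update_of_mem (mem_univ μ)]
  congr 1
  exact prod_congr rfl fun ν _ => apply_update (fun _ y => ∏ j, psiF q (y / z j)) x μ w ν

theorem stmt_1_general (q : ℂ) (hq0 : 0 < ‖q‖) (hq1 : ‖q‖ < 1)
    (τ : ℂ) (hτ : τ = q⁻¹) (n N : ℕ)
    (θ : (Fin n → ℂ) → (Fin N → ℂ) → ℂ)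
    (hθ : ∀ (x : Fin n → ℂ) (z : Fin N → ℂ) (μ : Fin n),
      θ (Function.update x μ (x μ * τ ^ 4)) z
        = θ x z * ∏ j, (-(x μ) * τ / z j))
    (μ : Fin n) (x : Fin n → ℂ) (z : Fin N → ℂ)
    (hx : ∀ ν, x ν ≠ 0) (hz : ∀ i, z i ≠ 0)
    (hreg : ∀ (ν : Fin n) (i : Fin N) (m : ℤ), Odd m → x ν / z i ≠ q ^ m) :
    kerPsi q θ (Function.update x μ (x μ * τ ^ 4)) z
      = (τ ^ (2 * N))⁻¹ * (∏ j, (x μ - z j / τ) / (x μ - z j / τ ^ 3)) *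
          kerPsi q θ x z := by
  subst hτ
  have hq : q ≠ 0 := norm_pos_iff.mp hq0
  have hfactor (j : Fin N) := neg_mul_div_mul_psiF_mul_inv_pow_four hq hq1 (hx μ) (hz j)
    (by simpa using hreg μ j 1 odd_one) (by exact_mod_cast hreg μ j 3 (by decide))
  have hconst : (q⁻¹ ^ (2 * N))⁻¹ = ∏ _j : Fin N, q ^ 2 := by
    rw [inv_pow, inv_inv, pow_mul, prod_const, card_univ, Fintype.card_fin]
  have hker := kerPsi_update q θ x z μ (x μ)
  rw [update_eq_self] at hker
  rw [kerPsi_update, hker, hθ, mul_assoc (θ x z), ← prod_mul_distrib,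
    prod_congr rfl fun j _ => hfactor j, prod_mul_distrib, prod_mul_distrib, hconst]
  ring

/-- quasi-periodicity of the kernel `Ψ` in a variable `x_μ`. -/
theorem stmt_1 (q : ℂ) (hq0 : 0 < ‖q‖) (hq1 : ‖q‖ < 1)
    (τ : ℂ) (hτ : τ = q⁻¹) (n N : ℕ) (hn : 0 < n) (hN : 0 < N)
    (θ : (Fin n → ℂ) → (Fin N → ℂ) → ℂ)
    (hθ : ∀ (x : Fin n → ℂ) (z : Fin N → ℂ) (μ : Fin n),
      θ (Function.update x μ (x μ * τ ^ 4)) z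
        = θ x z * ∏ j, (-(x μ) * τ / z j))
    (μ : Fin n) (x : Fin n → ℂ) (z : Fin N → ℂ)
    (hx : ∀ ν, x ν ≠ 0) (hz : ∀ i, z i ≠ 0)
    (hreg : ∀ (ν : Fin n) (i : Fin N) (m : ℤ), Odd m → x ν / z i ≠ q ^ m) :
    kerPsi q θ (Function.update x μ (x μ * τ ^ 4)) z
      = (τ ^ (2 * N))⁻¹ * (∏ j, (x μ - z j / τ) / (x μ - z j / τ ^ 3)) *
          kerPsi q θ x z :=
  stmt_1_general q hq0 hq1 τ hτ n N θ hθ μ x z hx hz hreg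
end

section
/- (Uniqueness of Δ^{(1l)}.) Let N ≥ 3. Suppose P ∈ ℂ[x, z₁,…,z_N] is homogeneous of total degree N−2 and satisfies, for every j with 2 ≤ j ≤ N, the restriction identity P|_{z_j = z₁τ²} = (x − z₁τ) · h^{(N−2)}(x|z₂,…,ẑ_j,…,z_N). Then P equals the polynomial Δ(x|z₁|z₂,…,z_N) = (x − z₁τ) · Σ_{κ=0}^{N−3} (1 − τ^{2(N−2−κ)}) (−τ)^κ x^{N−3−κ} · Σ_{λ=0}^{κ} (−z₁τ²)^λ σ_{κ−λ}(z₂,…,z_N). -/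
/-!
Write `ℓ_j = z_j − τ² z₁`. The closed form `Δ` is the value of a homogeneous polynomial of degree
`N − 2` which obeys the same restriction identities as `P`: on `ℓ_j = 0` the inner `λ`-sum
telescopes to `σ_κ(z₂, …, ẑ_j, …, z_N)`, which is what Vieta's formula produces for `h^{(N−2)}`.
Hence `P − Δ` vanishes on the `N − 1` hyperplanes `ℓ_j = 0`. The `ℓ_j` are pairwise coprime
irreducibles, so their product, of degree `N − 1`, divides the homogeneous polynomial `P − Δ` of
degree `N − 2`, which must therefore be zero.
-/

open Finset Function

namespace MvPolynomial

theorem isHomogeneous_esymm (σ R : Type*) [CommSemiring R] [Fintype σ] (n : ℕ) :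
    (esymm σ R n).IsHomogeneous n := by
  refine IsHomogeneous.sum _ _ _ fun t ht => ?_
  have h := IsHomogeneous.prod t X (fun _ => 1) fun i _ => isHomogeneous_X R i
  rwa [sum_const, smul_eq_mul, mul_one, (mem_powersetCard.mp ht).2] at h

variable {σ R : Type*} [CommRing R]

theorem X_sub_dvd_sub_aeval_update [DecidableEq σ] (i : σ) (f p : MvPolynomial σ R) :
    X i - f ∣ p - aeval (update X i f) p := by
  induction p using MvPolynomial.induction_on with
  | C a => simp
  | add p q hp hq => simpa only [map_add, add_sub_add_comm] using dvd_add hp hq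
  | mul_X p k hp =>
    have key : p * X k - aeval (update X i f) (p * X k) =
        (p - aeval (update X i f) p) * X k +
          aeval (update X i f) p * (X k - update X i f k) := by
      rw [map_mul, aeval_X]; ring
    rw [key]
    refine dvd_add (hp.mul_right _) (Dvd.dvd.mul_left ?_ _)
    obtain rfl | hk := eq_or_ne k i
    · rw [update_self]
    · rw [update_of_ne hk, sub_self]; exact dvd_zero _

theorem eval_aeval_update_X [DecidableEq σ] (i : σ) (f p : MvPolynomial σ R) (w : σ → R) :
    eval w (aeval (update X i f) p) = eval (update w i (eval w f)) p := by
  change aeval w (aeval _ p) = aeval _ p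
  rw [← AlgHom.comp_apply, comp_aeval]
  congr 2
  funext s
  obtain rfl | hs := eq_or_ne s i <;> simp [*]

theorem X_sub_dvd_of_eval_update_eq_zero [IsDomain R] [Infinite R] [DecidableEq σ] {i : σ}
    {f p : MvPolynomial σ R} (h : ∀ w : σ → R, eval (update w i (eval w f)) p = 0) :
    X i - f ∣ p := by
  have hsub : aeval (update X i f) p = 0 :=
    MvPolynomial.funext fun w => by rw [eval_aeval_update_X, h, map_zero]
  simpa only [hsub, sub_zero] using X_sub_dvd_sub_aeval_update i f p

theorem irreducible_X_sub_C_mul_X [IsDomain R] {i j : σ} (hij : i ≠ j) (c : R) :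
    Irreducible (X i - C c * X j) := by
  classical
  have hcoeff : coeff (Finsupp.single i 1) (X i - C c * X j) = 1 := by
    simp [coeff_X, Finsupp.single_left_inj one_ne_zero, hij.symm]
  have hne : X i - C c * X j ≠ 0 := fun h => by simp [h] at hcoeff
  refine irreducible_of_totalDegree_eq_one ?_ fun x hx => isUnit_of_dvd_one (hcoeff ▸ hx _)
  exact ((isHomogeneous_X R i).sub (isHomogeneous_C_mul_X c j)).totalDegree hne

theorem isRelPrime_X_sub_C_mul_X [IsDomain R] {i i' j : σ} (hi : i ≠ j) (hi' : i' ≠ j)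
    (hii' : i ≠ i') (c : R) : IsRelPrime (X i - C c * X j) (X i' - C c * X j) := by
  classical
  refine (irreducible_X_sub_C_mul_X hi c).isRelPrime_iff_not_dvd.mpr fun h => ?_
  have := map_dvd (eval (Pi.single i' 1)) h
  simp [hi', hii'] at this

theorem IsHomogeneous.eq_zero_of_dvd [IsDomain R] {p q : MvPolynomial σ R} {m n : ℕ}
    (hp : p.IsHomogeneous n) (hp0 : p ≠ 0) (hq : q.IsHomogeneous m) (hmn : m < n)
    (hdvd : p ∣ q) : q = 0 := by
  by_contra hq0
  obtain ⟨r, rfl⟩ := hdvd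
  have := totalDegree_mul_of_isDomain hp0 (right_ne_zero_of_mul hq0)
  rw [hp.totalDegree hp0, hq.totalDegree hq0] at this
  omega

end MvPolynomial

theorem Multiset.esymm_cons_succ {R : Type*} [CommSemiring R] (a : R) (s : Multiset R) (k : ℕ) :
    (a ::ₘ s).esymm (k + 1) = s.esymm (k + 1) + a * s.esymm k := by
  simp [Multiset.esymm, Multiset.powersetCard_cons, Multiset.map_map, Multiset.sum_map_mul_left]

theorem Fin.update_succ_succ_eq_cons_cons {α : Type*} {m : ℕ} (w : Fin (m + 2) → α) (j : Fin m)
    (v : α) :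
    update w j.succ.succ v =
      Fin.cons (w 0) (Fin.cons (w 1) (update (fun i => w i.succ.succ) j v)) := by
  rw [Fin.cons_update, Fin.cons_update]
  congr 1
  ext i
  exact Fin.cases rfl (Fin.cases rfl fun _ => rfl) i

theorem Fin.univ_val_map_update {α : Type*} {m : ℕ} (b : Fin (m + 1) → α) (j : Fin (m + 1))
    (t : α) : univ.val.map (update b j t) = t ::ₘ univ.val.map (b ∘ j.succAbove) := by
  rw [Fin.univ_succAbove m j]
  simp [Function.comp_def, Fin.succAbove_ne]

theorem esym_eq_esymm {m : ℕ} (a : Fin m → ℂ) (κ : ℕ) :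
    esym a κ = (univ.val.map a).esymm κ :=
  (Finset.esymm_map_val a univ κ).symm

theorem esym_update_succ {m : ℕ} (b : Fin (m + 1) → ℂ) (j : Fin (m + 1)) (t : ℂ) (k : ℕ) :
    esym (update b j t) (k + 1) =
      esym (b ∘ j.succAbove) (k + 1) + t * esym (b ∘ j.succAbove) k := by
  simp only [esym_eq_esymm, Fin.univ_val_map_update, Multiset.esymm_cons_succ]

theorem esym_neg_mul {m : ℕ} (a : Fin m → ℂ) (t : ℂ) (κ : ℕ) :
    esym (fun i => -(a i * t)) κ = (-t) ^ κ * esym a κ := by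
  simp only [esym, Finset.mul_sum]
  refine Finset.sum_congr rfl fun s hs => ?_
  rw [← (Finset.mem_powersetCard.mp hs).2, ← Finset.prod_const, ← Finset.prod_mul_distrib]
  exact Finset.prod_congr rfl fun i _ => by ring

theorem sum_neg_pow_mul_esym_update {m : ℕ} (b : Fin (m + 1) → ℂ) (j : Fin (m + 1)) (t : ℂ)
    (κ : ℕ) :
    ∑ lam ∈ range (κ + 1), (-t) ^ lam * esym (update b j t) (κ - lam) =
      esym (b ∘ j.succAbove) κ := by
  have step : ∀ lam ∈ range κ, (-t) ^ lam * esym (update b j t) (κ - lam) =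
      (-t) ^ lam * esym (b ∘ j.succAbove) (κ - lam) -
        (-t) ^ (lam + 1) * esym (b ∘ j.succAbove) (κ - (lam + 1)) := by
    intro lam _
    obtain ⟨k, hk⟩ : ∃ k, κ - lam = k + 1 := ⟨κ - lam - 1, by grind⟩
    rw [hk, esym_update_succ, show κ - (lam + 1) = k by omega, pow_succ]
    ring
  rw [sum_range_succ, sum_congr rfl step, sum_range_sub']
  simp [esym]

section Vieta

open Polynomial

theorem prod_X_sub_C_mul_eq_sum {m : ℕ} (a : Fin m → ℂ) (t : ℂ) :
    ∏ i, (X - C (a i * t)) = ∑ κ ∈ range (m + 1), C ((-t) ^ κ * esym a κ) * X ^ (m - κ) := by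
  have h := Multiset.prod_X_add_C_eq_sum_esymm (univ.val.map fun i => -(a i * t))
  simp only [Multiset.map_map, Multiset.card_map, card_val, card_univ, Fintype.card_fin,
    ← esym_eq_esymm, esym_neg_mul, Function.comp_def, map_neg, ← sub_eq_add_neg] at h
  exact h

theorem hN_eq_sum (τ : ℂ) {m : ℕ} (c : Fin m → ℂ) :
    hN τ c = ∑ κ ∈ range m,
      C ((1 - τ ^ (2 * (m - κ))) * (-τ) ^ κ * esym c κ) * X ^ (m - 1 - κ) := by
  have coeff : ∀ κ ∈ range (m + 1), C ((-τ) ^ κ * esym c κ) * X ^ (m - κ) -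
      C (τ ^ (2 * m)) * (C ((-τ⁻¹) ^ κ * esym c κ) * X ^ (m - κ)) =
        C ((1 - τ ^ (2 * (m - κ))) * (-τ) ^ κ * esym c κ) * X ^ (m - κ) := by
    intro κ hκ
    have h2m : 2 * m = κ + (κ + 2 * (m - κ)) := by grind
    rw [← mul_assoc, ← C_mul, ← sub_mul, ← C_sub, h2m, pow_add, pow_add, neg_pow τ⁻¹, neg_pow τ,
      inv_pow]
    field_simp
  have key : (∏ j, (X - C (c j * τ))) - C (τ ^ (2 * m)) * ∏ j, (X - C (c j * τ⁻¹)) =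
      (∑ κ ∈ range m, C ((1 - τ ^ (2 * (m - κ))) * (-τ) ^ κ * esym c κ) * X ^ (m - 1 - κ)) * X := by
    rw [prod_X_sub_C_mul_eq_sum, prod_X_sub_C_mul_eq_sum, mul_sum, ← sum_sub_distrib,
      sum_congr rfl coeff, sum_range_succ, sum_mul]
    simp only [Nat.sub_self, mul_zero, pow_zero, sub_self, zero_mul, map_zero, add_zero]
    refine sum_congr rfl fun κ hκ => ?_
    rw [mul_assoc (C _), ← pow_succ, show m - 1 - κ + 1 = m - κ by grind]
  rw [hN, key, divByMonic_eq_div _ monic_X]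
  exact mul_div_cancel_right₀ _ X_ne_zero

theorem eval_hN (τ : ℂ) {m : ℕ} (c : Fin m → ℂ) (x : ℂ) :
    (hN τ c).eval x = ∑ κ ∈ range m,
      (1 - τ ^ (2 * (m - κ))) * (-τ) ^ κ * esym c κ * x ^ (m - 1 - κ) := by
  simp [hN_eq_sum, eval_finsetSum]

end Vieta

theorem Delta1_update (τ : ℂ) {m : ℕ} (x z1 : ℂ) (b : Fin (m + 1) → ℂ) (j : Fin (m + 1)) :
    Delta1 τ x z1 (update b j (z1 * τ ^ 2)) = (x - z1 * τ) * (hN τ (b ∘ j.succAbove)).eval x := by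
  rw [Delta1, eval_hN]
  congr 1
  refine sum_congr rfl fun κ _ => ?_
  rw [sum_neg_pow_mul_esym_update, show m + 1 - 2 - κ = m - 1 - κ by omega, Nat.add_sub_cancel]
  ring

section DeltaPolynomial

open MvPolynomial

noncomputable def deltaPoly (τ : ℂ) (m : ℕ) : MvPolynomial (Fin (m + 2)) ℂ :=
  (X 0 - C τ * X 1) * ∑ κ ∈ range (m - 1),
    C ((1 - τ ^ (2 * (m - 1 - κ))) * (-τ) ^ κ) * X 0 ^ (m - 2 - κ) *
      ∑ lam ∈ range (κ + 1),
        (-(C (τ ^ 2) * X 1)) ^ lam *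
          rename (fun i : Fin m => i.succ.succ) (esymm (Fin m) ℂ (κ - lam))

theorem eval_deltaPoly (τ : ℂ) {m : ℕ} (x z1 : ℂ) (b : Fin m → ℂ) :
    eval (Fin.cons x (Fin.cons z1 b)) (deltaPoly τ m) = Delta1 τ x z1 b := by
  simp [deltaPoly, Delta1, esymm, esym, mul_comm z1]

theorem isHomogeneous_deltaPoly (τ : ℂ) (m : ℕ) : (deltaPoly τ m).IsHomogeneous (m - 1) := by
  obtain _ | _ | m := m
  · simp [deltaPoly, isHomogeneous_zero]
  · simp [deltaPoly, isHomogeneous_zero]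
  have hinner (κ : ℕ) : (∑ lam ∈ range (κ + 1), (-(C (τ ^ 2) * X 1)) ^ lam *
      rename (fun i : Fin (m + 2) => i.succ.succ) (esymm (Fin (m + 2)) ℂ (κ - lam)) :
        MvPolynomial (Fin (m + 4)) ℂ).IsHomogeneous κ := by
    refine IsHomogeneous.sum _ _ _ fun lam hlam => ?_
    have h := ((isHomogeneous_C_mul_X (τ ^ 2) (1 : Fin (m + 4))).neg.pow lam).mul
      ((isHomogeneous_esymm (Fin (m + 2)) ℂ (κ - lam)).rename_isHomogeneous
        (f := fun i : Fin (m + 2) => i.succ.succ))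
    rwa [show 1 * lam + (κ - lam) = κ by grind] at h
  have hsum : (∑ κ ∈ range (m + 1), C ((1 - τ ^ (2 * (m + 1 - κ))) * (-τ) ^ κ) *
      X 0 ^ (m - κ) * ∑ lam ∈ range (κ + 1), (-(C (τ ^ 2) * X 1)) ^ lam *
        rename (fun i : Fin (m + 2) => i.succ.succ) (esymm (Fin (m + 2)) ℂ (κ - lam)) :
          MvPolynomial (Fin (m + 4)) ℂ).IsHomogeneous m := by
    refine IsHomogeneous.sum _ _ _ fun κ hκ => ?_
    have h := (((isHomogeneous_X ℂ (0 : Fin (m + 4))).pow (m - κ)).C_mul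
      ((1 - τ ^ (2 * (m + 1 - κ))) * (-τ) ^ κ)).mul (hinner κ)
    rwa [show 1 * (m - κ) + κ = m by grind] at h
  have h := ((isHomogeneous_X ℂ (0 : Fin (m + 4))).sub (isHomogeneous_C_mul_X τ 1)).mul hsum
  rwa [show 1 + m = m + 2 - 1 by omega] at h

theorem eq_zero_of_isHomogeneous_of_eval_update_eq_zero {R : Type*} [Field R] [Infinite R]
    {m n : ℕ} (hn : n < m) (c : R) {p : MvPolynomial (Fin (m + 2)) R} (hp : p.IsHomogeneous n)
    (h : ∀ (j : Fin m) (x z1 : R) (b : Fin m → R),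
      eval (Fin.cons x (Fin.cons z1 (update b j (z1 * c)))) p = 0) :
    p = 0 := by
  set ℓ : Fin m → MvPolynomial (Fin (m + 2)) R := fun j => X j.succ.succ - C c * X 1
  have hne (j : Fin m) : j.succ.succ ≠ 1 := fun h => Fin.succ_ne_zero _ (Fin.succ_injective _ h)
  have hdvd : ∀ j ∈ univ, ℓ j ∣ p := fun j _ => X_sub_dvd_of_eval_update_eq_zero fun w => by
    rw [eval_mul, eval_C, eval_X, mul_comm, Fin.update_succ_succ_eq_cons_cons]
    exact h j (w 0) (w 1) (fun i => w i.succ.succ)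
  have hcop : ((univ : Finset (Fin m)) : Set (Fin m)).Pairwise (Function.onFun IsRelPrime ℓ) :=
    fun j _ j' _ hjj' => isRelPrime_X_sub_C_mul_X (hne j) (hne j') (by simpa using hjj') c
  have hhom : (∏ j, ℓ j).IsHomogeneous m := by
    simpa using IsHomogeneous.prod univ ℓ (fun _ => 1) fun j _ =>
      (isHomogeneous_X R _).sub (isHomogeneous_C_mul_X c 1)
  have hprod_ne : ∏ j, ℓ j ≠ 0 :=
    prod_ne_zero_iff.mpr fun j _ => (irreducible_X_sub_C_mul_X (hne j) c).ne_zero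
  exact hhom.eq_zero_of_dvd hprod_ne hp hn (prod_dvd_of_isRelPrime hcop hdvd)

end DeltaPolynomial

/-- Here `N = K + 3`; the variables of `P` are ordered as `(x, z₁, z₂, …, z_N)`. -/
theorem stmt_7_general (τ : ℂ) (K : ℕ)
    (P : MvPolynomial (Fin (K + 4)) ℂ)
    (hhom : P.IsHomogeneous (K + 1))
    (hres : ∀ (j : Fin (K + 2)) (x z1 : ℂ) (b : Fin (K + 2) → ℂ),
      MvPolynomial.eval (Fin.cons x (Fin.cons z1 (Function.update b j (z1 * τ ^ 2)))) P
        = (x - z1 * τ) * (hN τ (fun i : Fin (K + 1) => b (j.succAbove i))).eval x) :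
    ∀ (x z1 : ℂ) (b : Fin (K + 2) → ℂ),
      MvPolynomial.eval (Fin.cons x (Fin.cons z1 b)) P = Delta1 τ x z1 b := by
  have hzero : P - deltaPoly τ (K + 2) = 0 :=
    eq_zero_of_isHomogeneous_of_eval_update_eq_zero (Nat.lt_succ_self _) (τ ^ 2)
      (hhom.sub (isHomogeneous_deltaPoly τ (K + 2))) fun j x z1 b => by
        rw [map_sub, hres, eval_deltaPoly, Delta1_update]
        exact sub_self _
  intro x z1 b
  rw [← eval_deltaPoly, ← sub_eq_zero, ← map_sub, hzero, map_zero]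

/-- uniqueness of `Δ^{(1l)}`.  Here `N = K + 3`; the variables of `P`
are ordered as `(x, z₁, z₂, …, z_N)`, and `P` is homogeneous of degree `N − 2 = K + 1`. -/
theorem stmt_7 (q : ℂ) (hq0 : 0 < ‖q‖) (hq1 : ‖q‖ < 1)
    (τ : ℂ) (hτ : τ = q⁻¹) (K : ℕ)
    (P : MvPolynomial (Fin (K + 4)) ℂ)
    (hhom : P.IsHomogeneous (K + 1))
    (hres : ∀ (j : Fin (K + 2)) (x z1 : ℂ) (b : Fin (K + 2) → ℂ),
      MvPolynomial.eval (Fin.cons x (Fin.cons z1 (Function.update b j (z1 * τ ^ 2)))) P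
        = (x - z1 * τ) * (hN τ (fun i : Fin (K + 1) => b (j.succAbove i))).eval x) :
    ∀ (x z1 : ℂ) (b : Fin (K + 2) → ℂ),
      MvPolynomial.eval (Fin.cons x (Fin.cons z1 b)) P = Delta1 τ x z1 b :=
  stmt_7_general τ K P hhom hres
end
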